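/- arXiv:2412.17564 — 3 statements merged into one kernel-verified Lean document; each statement's English description precedes it below -/
import Mathlib

section
/- Let M be a unital C*-algebra with state ω and u ∈ M a unitary. Then for every integer n, ‖ω ∘ Der(uⁿ)‖ ≤ |n| · ‖ω ∘ Der u‖, where (Der a)(x) := ax − xa. -/
/-!
`Der` is a derivation, so `ω ∘ Der (a b) = (ω ∘ Der a) ∘ L_b + (ω ∘ Der b) ∘ R_a`; by induction
`‖ω ∘ Der (aᵐ)‖ ≤ m ‖ω ∘ Der a‖` whenever `‖a‖ ≤ 1`. For invertible `a` one has
`Der (a⁻¹) x = -Der a (a⁻¹ x a⁻¹)`, hence `‖ω ∘ Der a⁻¹‖ ≤ ‖a⁻¹‖² ‖ω ∘ Der a‖`. A unitary and its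
inverse have norm at most `1`, which gives the bound for negative powers as well.
-/

namespace ContinuousLinearMap

section InnerDer

variable (𝕜 : Type*) {M F : Type*} [NontriviallyNormedField 𝕜] [SeminormedRing M]
  [NormedSpace 𝕜 M] [IsScalarTower 𝕜 M M] [SMulCommClass 𝕜 M M]
  [SeminormedAddCommGroup F] [NormedSpace 𝕜 F]

noncomputable def innerDer (a : M) : M →L[𝕜] M :=
  mul 𝕜 M a - (mul 𝕜 M).flip a

variable {𝕜}

@[simp]
theorem innerDer_apply (a x : M) : innerDer 𝕜 a x = a * x - x * a :=
  rfl

@[simp]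
theorem innerDer_one : innerDer 𝕜 (1 : M) = 0 := by
  ext x
  simp

theorem opNorm_mul_flip_apply_le (a : M) : ‖(mul 𝕜 M).flip a‖ ≤ ‖a‖ :=
  opNorm_le_bound _ (norm_nonneg a) fun x => by
    simpa [mul_comm ‖x‖ ‖a‖] using norm_mul_le x a

theorem innerDer_mul (a b : M) :
    innerDer 𝕜 (a * b) =
      (innerDer 𝕜 a).comp (mul 𝕜 M b) + (innerDer 𝕜 b).comp ((mul 𝕜 M).flip a) := by
  ext x
  simp only [innerDer_apply, add_apply, comp_apply, mul_apply', flip_apply]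
  noncomm_ring

theorem innerDer_units_inv (a : Mˣ) :
    innerDer 𝕜 (↑a⁻¹ : M) = -(innerDer 𝕜 (a : M)).comp (mulLeftRight 𝕜 M ↑a⁻¹ ↑a⁻¹) := by
  ext x
  simp only [innerDer_apply, neg_apply, comp_apply, mulLeftRight_apply, ← mul_assoc,
    Units.mul_inv, one_mul]
  simp only [mul_assoc, Units.inv_mul, mul_one, neg_sub]

theorem norm_comp_innerDer_mul_le (ω : M →L[𝕜] F) (a b : M) :
    ‖ω.comp (innerDer 𝕜 (a * b))‖ ≤
      ‖ω.comp (innerDer 𝕜 a)‖ * ‖b‖ + ‖ω.comp (innerDer 𝕜 b)‖ * ‖a‖ := by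
  rw [innerDer_mul, comp_add, ← comp_assoc, ← comp_assoc]
  refine (norm_add_le _ _).trans (add_le_add ?_ ?_)
  · exact (opNorm_comp_le _ _).trans (by gcongr; exact opNorm_mul_apply_le 𝕜 M b)
  · exact (opNorm_comp_le _ _).trans (by gcongr; exact opNorm_mul_flip_apply_le a)

theorem norm_comp_innerDer_pow_le (ω : M →L[𝕜] F) {a : M} (ha : ‖a‖ ≤ 1) (m : ℕ) :
    ‖ω.comp (innerDer 𝕜 (a ^ m))‖ ≤ m * ‖ω.comp (innerDer 𝕜 a)‖ := by
  rcases m.eq_zero_or_pos with rfl | hm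
  · simp
  induction m, hm using Nat.le_induction with
  | base => simp
  | succ k hk ih =>
    have hak : ‖a ^ k‖ ≤ 1 := (norm_pow_le' a hk).trans (pow_le_one₀ (norm_nonneg a) ha)
    calc ‖ω.comp (innerDer 𝕜 (a ^ (k + 1)))‖
        ≤ ‖ω.comp (innerDer 𝕜 (a ^ k))‖ * ‖a‖ + ‖ω.comp (innerDer 𝕜 a)‖ * ‖a ^ k‖ := by
          rw [pow_succ]; exact norm_comp_innerDer_mul_le ω _ _
      _ ≤ k * ‖ω.comp (innerDer 𝕜 a)‖ * 1 + ‖ω.comp (innerDer 𝕜 a)‖ * 1 := by gcongr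
      _ = (k + 1 : ℕ) * ‖ω.comp (innerDer 𝕜 a)‖ := by push_cast; ring

theorem norm_comp_innerDer_units_inv_le (ω : M →L[𝕜] F) (a : Mˣ) :
    ‖ω.comp (innerDer 𝕜 (↑a⁻¹ : M))‖ ≤
      ‖(↑a⁻¹ : M)‖ * ‖(↑a⁻¹ : M)‖ * ‖ω.comp (innerDer 𝕜 (a : M))‖ := by
  rw [innerDer_units_inv, comp_neg, norm_neg, ← comp_assoc, mul_comm]
  exact (opNorm_comp_le _ _).trans (by gcongr; exact opNorm_mulLeftRight_apply_apply_le 𝕜 M _ _)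

theorem norm_comp_innerDer_zpow_le (ω : M →L[𝕜] F) {a : Mˣ} (ha : ‖(a : M)‖ ≤ 1)
    (ha' : ‖(↑a⁻¹ : M)‖ ≤ 1) (n : ℤ) :
    ‖ω.comp (innerDer 𝕜 (↑(a ^ n) : M))‖ ≤ |(n : ℝ)| * ‖ω.comp (innerDer 𝕜 (a : M))‖ := by
  obtain ⟨m, rfl | rfl⟩ := Int.eq_nat_or_neg n
  · rw [zpow_natCast, Units.val_pow_eq_pow_val, Int.cast_natCast, Nat.abs_cast]
    exact norm_comp_innerDer_pow_le ω ha m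
  · rw [zpow_neg, zpow_natCast, ← inv_pow, Units.val_pow_eq_pow_val, Int.cast_neg,
      Int.cast_natCast, abs_neg, Nat.abs_cast]
    calc ‖ω.comp (innerDer 𝕜 ((↑a⁻¹ : M) ^ m))‖
        ≤ m * ‖ω.comp (innerDer 𝕜 (↑a⁻¹ : M))‖ := norm_comp_innerDer_pow_le ω ha' m
      _ ≤ m * (1 * 1 * ‖ω.comp (innerDer 𝕜 (a : M))‖) := by
          gcongr
          exact (norm_comp_innerDer_units_inv_le ω a).trans (by gcongr)
      _ = m * ‖ω.comp (innerDer 𝕜 (a : M))‖ := by ring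

end InnerDer

end ContinuousLinearMap

theorem CStarRing.norm_coe_unitary_le_one {E : Type*} [NormedRing E] [StarRing E] [CStarRing E]
    (U : unitary E) : ‖(U : E)‖ ≤ 1 := by
  rcases subsingleton_or_nontrivial E with _ | _
  · simp [Subsingleton.elim (U : E) 0]
  · exact (CStarRing.norm_coe_unitary U).le

open scoped ComplexOrder

theorem stmt8_general {M : Type*} [NormedRing M] [StarRing M] [CStarRing M]
    [NormedAlgebra ℂ M]
    (ω : M →L[ℂ] ℂ)
    (u : unitary M) (n : ℤ) :
    ‖ω.comp (ContinuousLinearMap.mul ℂ M ((u ^ n : unitary M) : M)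
        - (ContinuousLinearMap.mul ℂ M).flip ((u ^ n : unitary M) : M))‖
      ≤ |(n : ℝ)| * ‖ω.comp (ContinuousLinearMap.mul ℂ M (u : M)
        - (ContinuousLinearMap.mul ℂ M).flip (u : M))‖ := by
  have h := ContinuousLinearMap.norm_comp_innerDer_zpow_le ω (a := Unitary.toUnits u)
    (CStarRing.norm_coe_unitary_le_one u)
    (by rw [← map_inv]; exact CStarRing.norm_coe_unitary_le_one u⁻¹) n
  rwa [← map_zpow] at h

/-- For a state `ω` on a unital C*-algebra `M` and a unitary `u`,
`‖ω ∘ Der (uⁿ)‖ ≤ |n| · ‖ω ∘ Der u‖` for every integer `n`, where `Der a : x ↦ a x − x a`. -/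
theorem stmt8 {M : Type*} [NormedRing M] [StarRing M] [CStarRing M]
    [NormedAlgebra ℂ M] [CompleteSpace M] [StarModule ℂ M] [SMulCommClass ℂ M M]
    [IsScalarTower ℂ M M]
    (ω : M →L[ℂ] ℂ) (hone : ω 1 = 1) (hpos : ∀ x : M, 0 ≤ ω (star x * x))
    (u : unitary M) (n : ℤ) :
    ‖ω.comp (ContinuousLinearMap.mul ℂ M ((u ^ n : unitary M) : M)
        - (ContinuousLinearMap.mul ℂ M).flip ((u ^ n : unitary M) : M))‖
      ≤ |(n : ℝ)| * ‖ω.comp (ContinuousLinearMap.mul ℂ M (u : M)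
        - (ContinuousLinearMap.mul ℂ M).flip (u : M))‖ :=
  stmt8_general ω u n
end

section
/- Let log : 𝕋 → ℂ denote the branch of the logarithm on the unit circle taking values in [−iπ, iπ). Then the map h : 𝕋 × [0,1] → ℂ, h(z,t) := exp(t·log z), satisfies: for each fixed t, |h(z,t)| = 1 for all z, h(z,0) = 1, h(z,1) = z, and t ↦ h(·,t) is continuous from [0,1] to L²(𝕋, λ) where λ is the Haar (normalized Lebesgue) measure on 𝕋. -/
/-!
`circleLog z` is purely imaginary, so `h(z, t)` is unimodular, and it differs from `Complex.log z`
only at `z = -1`, by `2πi`, so `exp (circleLog z) = z`. For fixed `z` the map `t ↦ h(z, t)` is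
continuous, and all values are bounded by `1`, so `L²`-continuity in `t` follows from dominated
convergence, regardless of the discontinuity of `h(·, t)` at `-1`.
-/

open MeasureTheory Set Filter Topology

noncomputable instance : MeasurableSpace Circle := borel Circle
instance : BorelSpace Circle := ⟨rfl⟩

/-- The branch of the logarithm on the unit circle taking values in `[−iπ, iπ)`. -/
noncomputable def circleLog (z : Circle) : ℂ :=
  Complex.I * (if Complex.arg (z : ℂ) = Real.pi then -Real.pi else Complex.arg (z : ℂ))

/-- `h(z,t) := exp (t · log z)`. -/
noncomputable def circlePow (z : Circle) (t : ℝ) : ℂ := Complex.exp ((t : ℂ) * circleLog z)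

/-- The normalized Haar measure on the circle. -/
noncomputable def circleHaar : Measure Circle := MeasureTheory.Measure.haar

theorem tendsto_integral_norm_sub_sq_of_bounded {X T E : Type*} [MeasurableSpace X]
    {μ : Measure X} [IsFiniteMeasure μ] [TopologicalSpace T] [FirstCountableTopology T]
    [NormedAddCommGroup E]
    {f : X → T → E} {C : ℝ} (hmeas : ∀ t, AEStronglyMeasurable (fun x => f x t) μ)
    (hbound : ∀ x t, ‖f x t‖ ≤ C) {t₀ : T} (hcont : ∀ x, ContinuousAt (f x) t₀) :
    Tendsto (fun t => ∫ x, ‖f x t - f x t₀‖ ^ 2 ∂μ) (𝓝 t₀) (𝓝 0) := by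
  have hlim : ∀ x, Tendsto (fun t => ‖f x t - f x t₀‖ ^ 2) (𝓝 t₀) (𝓝 0) := fun x => by
    simpa using (((hcont x).sub_const (f x t₀)).norm.pow 2)
  simpa using tendsto_integral_filter_of_dominated_convergence (fun _ => (2 * C) ^ 2)
    (.of_forall fun t => ((hmeas t).sub (hmeas t₀)).norm.pow 2)
    (.of_forall fun t => .of_forall fun x => by
      have hsub : ‖f x t - f x t₀‖ ≤ 2 * C :=
        (norm_sub_le _ _).trans (by linarith [hbound x t, hbound x t₀])
      simp only [Pi.pow_apply, Pi.sub_apply, norm_pow, norm_norm]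
      exact pow_le_pow_left₀ (norm_nonneg _) hsub 2)
    (integrable_const _) (.of_forall hlim)

theorem circleLog_eq (z : Circle) :
    circleLog z =
      Complex.log z - if Complex.arg z = Real.pi then 2 * Real.pi * Complex.I else 0 := by
  rw [circleLog, Complex.log, Circle.norm_coe, Real.log_one]
  split_ifs with h
  · rw [h]; push_cast; ring
  · push_cast; ring

theorem exp_circleLog (z : Circle) : Complex.exp (circleLog z) = z := by
  rw [circleLog_eq, Complex.exp_sub, Complex.exp_log (Circle.coe_ne_zero z)]
  split_ifs <;> simp [Complex.exp_two_pi_mul_I]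

theorem norm_circlePow (z : Circle) (t : ℝ) : ‖circlePow z t‖ = 1 := by
  simp [circlePow, circleLog, Complex.norm_exp]

theorem measurable_circleLog : Measurable circleLog := by
  -- `continuous_subtype_val.measurable` would use the subtype σ-algebra, not the Borel one above
  have harg : Measurable fun z : Circle => Complex.arg z :=
    Complex.measurable_arg.comp
      (Continuous.measurable (f := fun z : Circle => (z : ℂ)) (by fun_prop))
  exact (Complex.measurable_ofReal.comp
    (Measurable.ite (harg (measurableSet_singleton _)) measurable_const harg)).const_mul _

theorem measurable_circlePow (t : ℝ) : Measurable fun z => circlePow z t :=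
  Complex.measurable_exp.comp (measurable_circleLog.const_mul _)

theorem continuous_circlePow (z : Circle) : Continuous (circlePow z) := by
  unfold circlePow; fun_prop

instance : IsFiniteMeasure circleHaar := by
  unfold circleHaar; infer_instance

/-- `h(z,t) = exp(t log z)` satisfies `|h(z,t)| = 1`, `h(z,0) = 1`, `h(z,1) = z`, and
`t ↦ h(·,t)` is continuous from `[0,1]` to `L²(𝕋, λ)`. -/
theorem stmt9 :
    (∀ t ∈ Icc (0 : ℝ) 1, ∀ z : Circle, ‖circlePow z t‖ = 1) ∧
    (∀ z : Circle, circlePow z 0 = 1) ∧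
    (∀ z : Circle, circlePow z 1 = (z : ℂ)) ∧
    (∀ t₀ ∈ Icc (0 : ℝ) 1,
      Tendsto (fun t : ℝ => ∫ z : Circle, ‖circlePow z t - circlePow z t₀‖ ^ 2 ∂circleHaar)
        (nhdsWithin t₀ (Icc (0 : ℝ) 1)) (nhds 0)) := by
  refine ⟨fun t _ z => norm_circlePow z t, fun z => by simp [circlePow],
    fun z => by simp [circlePow, exp_circleLog], fun t₀ _ => ?_⟩
  exact (tendsto_integral_norm_sub_sq_of_bounded
    (fun t => (measurable_circlePow t).aestronglyMeasurable) (fun z t => (norm_circlePow z t).le)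
    fun z => (continuous_circlePow z).continuousAt).mono_left nhdsWithin_le_nhds
end

section
/- Let G be a topological group with right-invariant metric d, H ⊆ G a subgroup, X := H\G with quotient metric d_X(Hu, Hv) = inf_{w∈H} d(u, wv), and Q : G → X the quotient map. If σ : X → G is continuous with d(σ(x), Q⁻¹(x)) < ε for all x ∈ X (where d(g, S) := inf_{s∈S} d(g,s)), then for every x₀ ∈ X and κ ∈ (0, ε) with Q⁻¹(x₀) ∩ Ball(σ(x₀), ε−κ) ≠ ∅, the set Q(Ball(σ(x₀), ε−κ)) ∩ {x : d(σ(x₀), σ(x)) < κ} is an open neighborhood of x₀ contained in {x : Q⁻¹(x) ∩ Ball(σ(x), ε) ≠ ∅}. -/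
open Metric Set

theorem image_ball_inter_subset_fiber_inter_ball {α X : Type*} [PseudoMetricSpace α]
    (Q : α → X) (σ : X → α) (x₀ : X) (r κ : ℝ) :
    Q '' ball (σ x₀) r ∩ {x | dist (σ x₀) (σ x) < κ} ⊆
      {x | (Q ⁻¹' {x} ∩ ball (σ x) (r + κ)).Nonempty} := by
  rintro _ ⟨⟨u, hu, rfl⟩, hx⟩
  refine ⟨u, rfl, ?_⟩
  calc dist u (σ (Q u)) ≤ dist u (σ x₀) + dist (σ x₀) (σ (Q u)) := dist_triangle _ _ _
    _ < r + κ := add_lt_add hu hx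

theorem stmt19_general {G : Type*} [Group G] [MetricSpace G] [IsTopologicalGroup G]
    (H : Subgroup G) (σ : Quotient (QuotientGroup.rightRel H) → G) (hσ : Continuous σ)
    (ε : ℝ)
    (x₀ : Quotient (QuotientGroup.rightRel H)) (κ : ℝ) (hκ : κ ∈ Set.Ioo 0 ε)
    (hne : ((Quotient.mk (QuotientGroup.rightRel H) ⁻¹' {x₀}) ∩
      Metric.ball (σ x₀) (ε - κ)).Nonempty) :
    IsOpen ((Quotient.mk (QuotientGroup.rightRel H) '' Metric.ball (σ x₀) (ε - κ)) ∩
        {x | dist (σ x₀) (σ x) < κ}) ∧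
    x₀ ∈ (Quotient.mk (QuotientGroup.rightRel H) '' Metric.ball (σ x₀) (ε - κ)) ∩
        {x | dist (σ x₀) (σ x) < κ} ∧
    ((Quotient.mk (QuotientGroup.rightRel H) '' Metric.ball (σ x₀) (ε - κ)) ∩
        {x | dist (σ x₀) (σ x) < κ}) ⊆
      {x | ((Quotient.mk (QuotientGroup.rightRel H) ⁻¹' {x}) ∩
        Metric.ball (σ x) ε).Nonempty} := by
  obtain ⟨u₀, hu₀_fiber, hu₀_ball⟩ := hne
  have hQ_open : IsOpenMap (Quotient.mk (QuotientGroup.rightRel H)) :=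
    isOpenMap_quotient_mk'_mul
  refine ⟨?_, ⟨⟨u₀, hu₀_ball, hu₀_fiber⟩, by simpa using hκ.1⟩, ?_⟩
  · exact (hQ_open _ isOpen_ball).inter (isOpen_lt (continuous_const.dist hσ) continuous_const)
  · simpa only [sub_add_cancel] using
      image_ball_inter_subset_fiber_inter_ball (Quotient.mk (QuotientGroup.rightRel H)) σ x₀
        (ε - κ) κ

/-- The key openness step: for a topological group `G` with right-invariant metric,
`H ≤ G`, `X = H\G` with quotient map `Q`, and a continuous `σ : X → G` with
`d(σ x, Q⁻¹ x) < ε` for all `x`: for every `x₀` and `κ ∈ (0, ε)` with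
`Q⁻¹ x₀ ∩ Ball(σ x₀, ε−κ) ≠ ∅`, the set
`Q(Ball(σ x₀, ε−κ)) ∩ {x : d(σ x₀, σ x) < κ}` is an open neighborhood of `x₀` contained in
`{x : Q⁻¹ x ∩ Ball(σ x, ε) ≠ ∅}`. -/
theorem stmt19 {G : Type*} [Group G] [MetricSpace G] [IsTopologicalGroup G]
    (hinv : ∀ u v g : G, dist (u * g) (v * g) = dist u v)
    (H : Subgroup G) (σ : Quotient (QuotientGroup.rightRel H) → G) (hσ : Continuous σ)
    (ε : ℝ) (hsec : ∀ x, Metric.infDist (σ x) (Quotient.mk (QuotientGroup.rightRel H) ⁻¹' {x}) < ε)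
    (x₀ : Quotient (QuotientGroup.rightRel H)) (κ : ℝ) (hκ : κ ∈ Set.Ioo 0 ε)
    (hne : ((Quotient.mk (QuotientGroup.rightRel H) ⁻¹' {x₀}) ∩
      Metric.ball (σ x₀) (ε - κ)).Nonempty) :
    IsOpen ((Quotient.mk (QuotientGroup.rightRel H) '' Metric.ball (σ x₀) (ε - κ)) ∩
        {x | dist (σ x₀) (σ x) < κ}) ∧
    x₀ ∈ (Quotient.mk (QuotientGroup.rightRel H) '' Metric.ball (σ x₀) (ε - κ)) ∩
        {x | dist (σ x₀) (σ x) < κ} ∧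
    ((Quotient.mk (QuotientGroup.rightRel H) '' Metric.ball (σ x₀) (ε - κ)) ∩
        {x | dist (σ x₀) (σ x) < κ}) ⊆
      {x | ((Quotient.mk (QuotientGroup.rightRel H) ⁻¹' {x}) ∩
        Metric.ball (σ x) ε).Nonempty} :=
  stmt19_general H σ hσ ε x₀ κ hκ hne
end
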